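/- Let (b_n) be positive reals with b_n → 0, Σ_{n=1}^∞ b_n < ∞, and b_m/2 − Σ_{n=m+1}^∞ b_n > 0 for every m. Let ϖ₁ be a modulus of continuity and let (a_n) be positive even integers such that: (a1) a_n/a_{n−1} is a positive even integer; (a2) a_m/a_{m−1} ≥ (2π Σ_{n=1}^∞ b_n)/b_m; (a3) 1/a_m ≤ ϖ₁⁻¹(m^{−1}(b_m/2 − Σ_{n=m+1}^∞ b_n)). Then the continuous function f(x) = Σ_{n=1}^∞ b_n sin(π a_n x) is nowhere ϖ₁-continuous: for every x > 0 there is a sequence Δx_m → 0 with |f(x + Δx_m) − f(x)| / ϖ₁(|Δx_m|) ≥ m → +∞. -/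

import Mathlib

/-!
Move `x` by `Δₘ = d / aₘ`, where `|d| ≤ 1` carries `aₘ x` to a half-integer at which
`sin (π ·)` has the sign opposite to `sin (π aₘ x)`; so the `m`-th term changes by at
least `bₘ`. Since `2 aₘ ∣ aₙ` for `n > m`, every later term vanishes at `x + Δₘ` and the
tail changes by at most `∑_{n > m} bₙ`, while the sine being `1`-Lipschitz and (a2) bound
the change of the first `m` terms by `π (∑ bₙ) aₘ₋₁ / aₘ ≤ bₘ / 2`. Hence
`|f (x + Δₘ) - f x| ≥ bₘ / 2 - ∑_{n > m} bₙ`, which by (a3) is at least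
`m ϖ₁ (1 / aₘ) ≥ m ϖ₁ |Δₘ|`.
-/

/-- A modulus of continuity. -/
def IsModulusOfContinuity (ϖ : ℝ → ℝ) : Prop :=
  StrictMonoOn ϖ (Set.Ioi 0) ∧ ContinuousOn ϖ (Set.Ioi 0) ∧
  (∀ x > (0:ℝ), 0 < ϖ x) ∧ Filter.Tendsto ϖ (nhdsWithin 0 (Set.Ioi 0)) (nhds 0)

/-- The Weierstrass-type series f(x) = Σ bₙ sin(π aₙ x). -/
noncomputable def weierF (a : ℕ → ℕ) (b : ℕ → ℝ) (x : ℝ) : ℝ :=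
  ∑' n, b n * Real.sin (Real.pi * (a n : ℝ) * x)

open Real Filter Finset

lemma IsModulusOfContinuity.pos {ϖ : ℝ → ℝ} (hϖ : IsModulusOfContinuity ϖ) {s : ℝ}
    (hs : 0 < s) : 0 < ϖ s :=
  hϖ.2.2.1 s hs

lemma IsModulusOfContinuity.mono {ϖ : ℝ → ℝ} (hϖ : IsModulusOfContinuity ϖ) {s t : ℝ}
    (hs : 0 < s) (hst : s ≤ t) : ϖ s ≤ ϖ t :=
  hϖ.1.monotoneOn hs (hs.trans_le hst) hst

lemma IsModulusOfContinuity.natCast_le_div {ϖ : ℝ → ℝ} (hϖ : IsModulusOfContinuity ϖ)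
    {m : ℕ} (hm : 0 < m) {s t D E : ℝ} (hs : 0 < s) (hst : s ≤ t) (ht : ϖ t ≤ (m : ℝ)⁻¹ * D)
    (hDE : D ≤ E) : (m : ℝ) ≤ E / ϖ s := by
  rw [le_div_iff₀ (hϖ.pos hs)]
  calc (m : ℝ) * ϖ s ≤ m * ((m : ℝ)⁻¹ * D) := by
        gcongr
        exact (hϖ.mono hs hst).trans ht
    _ = D := by field_simp
    _ ≤ E := hDE

lemma one_le_abs_sin_pi_floor_add_sub (u c : ℝ) (hc : sin (π * c) = -1) :
    1 ≤ |sin (π * (⌊u⌋ + c)) - sin (π * u)| := by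
  set N := ⌊u⌋
  have hsin_shift : sin (π * (N + c)) = -(-1) ^ N := by
    rw [show π * (N + c) = π * c + N * π by ring, sin_add_int_mul_pi, hc, mul_neg_one]
  have hsin_u : sin (π * u) = (-1) ^ N * sin (π * Int.fract u) := by
    conv_lhs => rw [← Int.floor_add_fract u]
    rw [show π * (N + Int.fract u) = π * Int.fract u + N * π by ring, sin_add_int_mul_pi]
  have hsin_fract : 0 ≤ sin (π * Int.fract u) :=
    sin_nonneg_of_nonneg_of_le_pi (by positivity [Int.fract_nonneg u])
      (by nlinarith [Int.fract_lt_one u, pi_pos])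
  rw [hsin_shift, hsin_u, show ∀ s : ℝ, -(-1) ^ N - (-1) ^ N * s = -((-1) ^ N * (1 + s)) by
    intro s; ring, abs_neg, abs_mul, abs_neg_one_zpow, one_mul, abs_of_nonneg (by linarith)]
  linarith

lemma exists_shift_to_half_integer (u : ℝ) :
    ∃ d : ℝ, d ≠ 0 ∧ |d| ≤ 1 ∧ (∃ k : ℤ, 2 * (u + d) = k) ∧
      1 ≤ |sin (π * (u + d)) - sin (π * u)| := by
  have hu := Int.floor_add_fract u
  have ht0 := Int.fract_nonneg u
  have ht1 := Int.fract_lt_one u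
  by_cases ht : Int.fract u ≤ 1 / 2
  · refine ⟨-1 / 2 - Int.fract u, by linarith, abs_le.2 ⟨by linarith, by linarith⟩,
      ⟨2 * ⌊u⌋ - 1, by push_cast; linarith⟩, ?_⟩
    rw [show u + (-1 / 2 - Int.fract u) = ⌊u⌋ + -1 / 2 by linarith]
    refine one_le_abs_sin_pi_floor_add_sub u _ ?_
    rw [show π * (-1 / 2) = -(π / 2) by ring, sin_neg, sin_pi_div_two]
  · refine ⟨3 / 2 - Int.fract u, by linarith, abs_le.2 ⟨by linarith, by linarith⟩,
      ⟨2 * ⌊u⌋ + 3, by push_cast; linarith⟩, ?_⟩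
    rw [show u + (3 / 2 - Int.fract u) = ⌊u⌋ + 3 / 2 by linarith]
    refine one_le_abs_sin_pi_floor_add_sub u _ ?_
    rw [show π * (3 / 2) = π / 2 + π by ring, sin_add_pi, sin_pi_div_two]

lemma two_mul_dvd_of_lt {a : ℕ → ℕ} (h : ∀ m, 2 * a m ∣ a (m + 1)) {m n : ℕ} (hmn : m < n) :
    2 * a m ∣ a n := by
  induction n, hmn using Nat.le_induction with
  | base => exact h m
  | succ n _ ih => exact ih.trans ((dvd_mul_left (a n) 2).trans (h n))

lemma strictMono_of_two_mul_dvd_succ {a : ℕ → ℕ} (hpos : ∀ n, 0 < a n)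
    (h : ∀ m, 2 * a m ∣ a (m + 1)) : StrictMono a :=
  strictMono_nat_of_lt_succ fun m => by
    have := Nat.le_of_dvd (hpos _) (h m)
    have := hpos m
    omega

lemma sin_pi_mul_eq_zero_of_two_mul_dvd {A B : ℕ} (hAB : 2 * A ∣ B) {w : ℝ} {k : ℤ}
    (hk : 2 * (A * w) = k) : sin (π * B * w) = 0 := by
  obtain ⟨j, rfl⟩ := hAB
  rw [show π * ((2 * A * j : ℕ) : ℝ) * w = ((j * k : ℤ) : ℝ) * π by push_cast; rw [← hk]; ring,
    sin_int_mul_pi]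

lemma summable_mul_sin {b : ℕ → ℝ} (hb : Summable b) (θ : ℕ → ℝ) :
    Summable fun n => b n * sin (θ n) :=
  hb.abs.of_norm_bounded fun n => by
    rw [norm_mul, norm_eq_abs, norm_eq_abs]
    exact mul_le_of_le_one_right (abs_nonneg _) (abs_sin_le_one _)

lemma abs_sub_sum_sub_tsum_le_abs_tsum {g b : ℕ → ℝ} (hg : Summable g) (hb : Summable b)
    (m : ℕ) (htail : ∀ n, |g (n + m + 1)| ≤ b (n + m + 1)) :
    |g m| - ∑ n ∈ range m, |g n| - ∑' n, b (n + m + 1) ≤ |∑' n, g n| := by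
  have hg_tail : Summable fun n => g (n + (m + 1)) := (summable_nat_add_iff (m + 1)).2 hg
  have hT : |∑' n, g (n + (m + 1))| ≤ ∑' n, b (n + m + 1) :=
    (norm_tsum_le_tsum_norm hg_tail.norm).trans <|
      hg_tail.norm.tsum_le_tsum htail ((summable_nat_add_iff (m + 1)).2 hb)
  have hH := abs_sum_le_sum_abs g (range m)
  rw [← hg.sum_add_tsum_nat_add (m + 1), sum_range_succ]
  set H := ∑ n ∈ range m, g n
  set T := ∑' n, g (n + (m + 1))
  have := abs_add_three (H + g m + T) (-H) (-T)
  rw [abs_neg, abs_neg, show H + g m + T + -H + -T = g m by ring] at this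
  linarith

lemma sum_range_abs_sub_le {a : ℕ → ℕ} (ha : Monotone a) {b : ℕ → ℝ} (hb : ∀ n, 0 ≤ b n)
    (hsum : Summable b) (m : ℕ) (x y : ℝ) :
    ∑ n ∈ range (m + 1), |b n * sin (π * a n * y) - b n * sin (π * a n * x)| ≤
      π * (∑' n, b n) * a m * |y - x| := by
  calc ∑ n ∈ range (m + 1), |b n * sin (π * a n * y) - b n * sin (π * a n * x)|
      ≤ ∑ n ∈ range (m + 1), b n * (π * a m * |y - x|) := by
        refine sum_le_sum fun n hn => ?_
        rw [← mul_sub, abs_mul, abs_of_nonneg (hb n)]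
        refine mul_le_mul_of_nonneg_left ?_ (hb n)
        calc |sin (π * a n * y) - sin (π * a n * x)| ≤ |π * a n * y - π * a n * x| :=
              abs_sin_sub_sin_le _ _
          _ = π * a n * |y - x| := by rw [← mul_sub, abs_mul, abs_of_nonneg (by positivity)]
          _ ≤ π * a m * |y - x| := by gcongr; exact ha (mem_range_succ_iff.1 hn)
    _ = (∑ n ∈ range (m + 1), b n) * (π * a m * |y - x|) := (sum_mul _ _ _).symm
    _ ≤ (∑' n, b n) * (π * a m * |y - x|) := by
        gcongr
        exact hsum.sum_le_tsum _ fun n _ => hb n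
    _ = π * (∑' n, b n) * a m * |y - x| := by ring

theorem half_sub_tail_le_abs_weierF_sub {a : ℕ → ℕ} {b : ℕ → ℝ} (hb : ∀ n, 0 ≤ b n)
    (hsum : Summable b) (hdvd : ∀ m, 2 * a m ∣ a (m + 1)) (ha : Monotone a) {m : ℕ}
    (hapos : 0 < a (m + 1)) (hgrowth : 2 * π * (∑' n, b n) * a m ≤ b (m + 1) * a (m + 1))
    {x d : ℝ} (hd : |d| ≤ 1) {k : ℤ} (hk : 2 * (a (m + 1) * x + d) = k)
    (hsin : 1 ≤ |sin (π * (a (m + 1) * x + d)) - sin (π * (a (m + 1) * x))|) :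
    b (m + 1) / 2 - ∑' n, b (n + (m + 1) + 1) ≤
      |weierF a b (x + d / a (m + 1)) - weierF a b x| := by
  set A : ℝ := (a (m + 1) : ℝ)
  have hA : 0 < A := Nat.cast_pos.2 hapos
  set y := x + d / A
  have hAy : A * y = A * x + d := by simp only [y]; field_simp
  have hyx : |y - x| ≤ 1 / A := by
    rw [show y - x = d / A by ring, abs_div, abs_of_pos hA]
    gcongr
  set g : ℕ → ℝ := fun n => b n * sin (π * a n * y) - b n * sin (π * a n * x)
  have hg : Summable g := (summable_mul_sin hsum _).sub (summable_mul_sin hsum _)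
  have hdiff : weierF a b y - weierF a b x = ∑' n, g n :=
    ((summable_mul_sin hsum _).tsum_sub (summable_mul_sin hsum _)).symm
  have htail : ∀ n, |g (n + (m + 1) + 1)| ≤ b (n + (m + 1) + 1) := fun n => by
    have hvanish : sin (π * a (n + (m + 1) + 1) * y) = 0 :=
      sin_pi_mul_eq_zero_of_two_mul_dvd (two_mul_dvd_of_lt (m := m + 1) hdvd (by omega))
        (by rw [hAy, hk])
    simp only [g, hvanish, mul_zero, zero_sub, abs_neg, abs_mul, abs_of_nonneg (hb _)]
    exact mul_le_of_le_one_right (hb _) (abs_sin_le_one _)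
  have hdominant : b (m + 1) ≤ |g (m + 1)| := by
    simp only [g, ← mul_sub, abs_mul, abs_of_nonneg (hb _), mul_assoc π]
    rw [hAy]
    exact le_mul_of_one_le_right (hb _) hsin
  have hfirst : ∑ n ∈ range (m + 1), |g n| ≤ b (m + 1) / 2 := by
    refine (sum_range_abs_sub_le ha hb hsum m x y).trans ?_
    calc π * (∑' n, b n) * a m * |y - x| ≤ π * (∑' n, b n) * a m * (1 / A) := by
          gcongr
          exact mul_nonneg (mul_nonneg pi_pos.le (tsum_nonneg hb)) (Nat.cast_nonneg _)
      _ ≤ b (m + 1) / 2 := by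
          rw [mul_one_div, div_le_iff₀ hA]
          linarith
  rw [hdiff]
  have := abs_sub_sum_sub_tsum_le_abs_tsum hg hsum (m + 1) htail
  linarith

theorem stmt_16_general (b : ℕ → ℝ) (hbpos : ∀ n, 0 < b n)
    (hsum : Summable b)
    (ϖ₁ : ℝ → ℝ) (hmod : IsModulusOfContinuity ϖ₁)
    (a : ℕ → ℕ) (hapos : ∀ n, 0 < a n)
    (ha1 : ∀ m : ℕ, ∃ k : ℕ, 0 < k ∧ a (m + 1) = 2 * k * a m)
    (ha2 : ∀ m : ℕ, (2 * Real.pi * ∑' n, b n) / b (m + 1) ≤ (a (m + 1) : ℝ) / (a m : ℝ))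
    (ha3 : ∀ m : ℕ, 1 ≤ m →
      ϖ₁ (1 / (a m : ℝ)) ≤ (m : ℝ)⁻¹ * (b m / 2 - ∑' n, b (n + m + 1))) :
    ∀ x : ℝ, 0 < x → ∃ Δ : ℕ → ℝ,
      Filter.Tendsto Δ Filter.atTop (nhds 0) ∧ (∀ m, Δ m ≠ 0) ∧
      ∀ᶠ m : ℕ in Filter.atTop,
        (m : ℝ) ≤ |weierF a b (x + Δ m) - weierF a b x| / ϖ₁ |Δ m| := by
  intro x _
  have hdvd : ∀ m, 2 * a m ∣ a (m + 1) := fun m => by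
    obtain ⟨k, -, hk⟩ := ha1 m
    exact ⟨k, by rw [hk]; ring⟩
  have ha := strictMono_of_two_mul_dvd_succ hapos hdvd
  have hapos' : ∀ n, (0 : ℝ) < a n := fun n => Nat.cast_pos.2 (hapos n)
  choose d hd0 hd1 hdk hdsin using exists_shift_to_half_integer
  set Δ : ℕ → ℝ := fun m => d (a m * x) / a m
  have hΔ : ∀ m, |Δ m| ≤ 1 / a m := fun m => by
    rw [abs_div, abs_of_pos (hapos' m)]
    exact div_le_div_of_nonneg_right (hd1 _) (hapos' m).le
  have hΔpos : ∀ m, 0 < |Δ m| := fun m => abs_pos.2 (div_ne_zero (hd0 _) (hapos' m).ne')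
  have ha_inv : Tendsto (fun m => 1 / (a m : ℝ)) atTop (nhds 0) := by
    simpa only [one_div, Function.comp_def] using
      tendsto_inv_atTop_zero.comp (tendsto_natCast_atTop_atTop.comp ha.tendsto_atTop)
  refine ⟨Δ, squeeze_zero_norm hΔ ha_inv, fun m => abs_pos.1 (hΔpos m), ?_⟩
  filter_upwards [eventually_ge_atTop 1] with m hm
  obtain ⟨k, rfl⟩ := Nat.exists_eq_add_of_le' hm
  obtain ⟨j, hj⟩ := hdk (a (k + 1) * x)
  have ha2' : 2 * π * (∑' n, b n) * a k ≤ b (k + 1) * a (k + 1) := by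
    have := ha2 k
    rw [div_le_div_iff₀ (hbpos _) (hapos' k)] at this
    linarith
  exact hmod.natCast_le_div (by omega) (hΔpos _) (hΔ _) (ha3 _ hm) <|
    half_sub_tail_le_abs_weierF_sub (fun n => (hbpos n).le) hsum hdvd ha.monotone (hapos _)
      ha2' (hd1 _) hj (hdsin _)

/-- under (a1)–(a3) the continuous function f(x) = Σ bₙ sin(π aₙ x) is
nowhere ϖ₁-continuous: at every x > 0 there are perturbations Δxₘ → 0, Δxₘ ≠ 0, with
|f(x + Δxₘ) − f(x)| / ϖ₁(|Δxₘ|) ≥ m → +∞. -/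
theorem stmt_16 (b : ℕ → ℝ) (hbpos : ∀ n, 0 < b n)
    (hb0 : Filter.Tendsto b Filter.atTop (nhds 0)) (hsum : Summable b)
    (htail : ∀ m : ℕ, 0 < b m / 2 - ∑' n, b (n + m + 1))
    (ϖ₁ : ℝ → ℝ) (hmod : IsModulusOfContinuity ϖ₁)
    (a : ℕ → ℕ) (hapos : ∀ n, 0 < a n) (haeven : ∀ n, ∃ k : ℕ, 0 < k ∧ a n = 2 * k)
    (ha1 : ∀ m : ℕ, ∃ k : ℕ, 0 < k ∧ a (m + 1) = 2 * k * a m)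
    (ha2 : ∀ m : ℕ, (2 * Real.pi * ∑' n, b n) / b (m + 1) ≤ (a (m + 1) : ℝ) / (a m : ℝ))
    (ha3 : ∀ m : ℕ, 1 ≤ m →
      ϖ₁ (1 / (a m : ℝ)) ≤ (m : ℝ)⁻¹ * (b m / 2 - ∑' n, b (n + m + 1))) :
    ∀ x : ℝ, 0 < x → ∃ Δ : ℕ → ℝ,
      Filter.Tendsto Δ Filter.atTop (nhds 0) ∧ (∀ m, Δ m ≠ 0) ∧
      ∀ᶠ m : ℕ in Filter.atTop,
        (m : ℝ) ≤ |weierF a b (x + Δ m) - weierF a b x| / ϖ₁ |Δ m| :=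
  stmt_16_general b hbpos hsum ϖ₁ hmod a hapos ha1 ha2 ha3
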